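/- Let N ≥ 1 be an integer and ρ ∈ L¹(ℝ³) with ρ ≥ 0 a.e. and ∫ρ = N. Define J(t) = (1/N) ∫_{ℝ²} ρ(t, y) dy for t ∈ ℝ, Y(t) = ∫_{−∞}^{t} J(s) ds, and for each k ∈ ℤ let φ_k(x) = (ρ(x)/N)^{1/2} e^{2πi k Y(x¹)}, where x = (x¹,x²,x³). Then the family {φ_k}_{k∈ℤ} is orthonormal in L²(ℝ³; ℂ): ∫_{ℝ³} φ_j(x) \overline{φ_k(x)} dx = 1 if j = k and 0 otherwise. -/

import Mathlib

noncomputable section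

open MeasureTheory
open scoped Real

/-- The marginal `J(t) = (1/N) ∫_{ℝ²} ρ(t, y) dy`. -/
def marginalJ (N : ℕ) (ρ : (Fin 3 → ℝ) → ℝ) (t : ℝ) : ℝ :=
  (1 / (N : ℝ)) * ∫ y : Fin 2 → ℝ, ρ (Fin.cons t y)

/-- The cumulative marginal `Y(t) = ∫_{-∞}^t J(s) ds`. -/
def cumulY (N : ℕ) (ρ : (Fin 3 → ℝ) → ℝ) (t : ℝ) : ℝ :=
  ∫ s in Set.Iio t, marginalJ N ρ s

/-- The orbital `φ_k(x) = (ρ(x)/N)^{1/2} e^{2πik Y(x¹)}`. -/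
def orbital (N : ℕ) (ρ : (Fin 3 → ℝ) → ℝ) (k : ℤ) (x : Fin 3 → ℝ) : ℂ :=
  (Real.sqrt (ρ x / N) : ℂ) *
    Complex.exp (2 * π * Complex.I * k * (cumulY N ρ (x 0) : ℂ))

/-!
Write `J` for the marginal density and `Y` for its distribution function. Since `|φ_k|² = ρ/N`,
the product `φ_j conj φ_k` is `(ρ/N) e^{2πi(j-k)Y(x¹)}`, and integrating out the last two
coordinates turns its integral into `∫ J(t) e^{2πi(j-k)Y(t)} dt`. As `Y` is continuous, the
probability integral transform says that `Y` pushes `J(t) dt` forward to the uniform measure on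
`(0, 1]`, so this integral is `∫₀¹ e^{2πi(j-k)u} du = δ_{jk}`.
-/

open ProbabilityTheory Set Filter Topology

theorem Monotone.exists_setOf_le_eq_Iic {G : ℝ → ℝ} (hmono : Monotone G) (hcont : Continuous G)
    {a : ℝ} (hle : ∃ t, G t ≤ a) (hlt : ∃ t, a < G t) :
    ∃ c, G c = a ∧ {t | G t ≤ a} = Iic c := by
  obtain ⟨T, hT⟩ := hlt
  set S := {t | G t ≤ a}
  have hbdd : BddAbove S := ⟨T, fun t ht => (hmono.reflect_lt (lt_of_le_of_lt ht hT)).le⟩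
  have hcS : sSup S ∈ S := (isClosed_le hcont continuous_const).csSup_mem hle hbdd
  have hgt : ∀ᶠ t in 𝓝[>] sSup S, a ≤ G t :=
    eventually_nhdsWithin_of_forall fun t ht => le_of_lt <| not_le.1 fun htS =>
      (le_csSup hbdd htS).not_gt ht
  refine ⟨sSup S, le_antisymm hcS ?_, Subset.antisymm (fun t => le_csSup hbdd) ?_⟩
  · exact _root_.ge_of_tendsto (hcont.continuousAt.tendsto.mono_left nhdsWithin_le_nhds) hgt
  · exact fun t ht => (hmono ht).trans hcS

section IntegralTransform

variable (μ : Measure ℝ) [IsProbabilityMeasure μ]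

theorem measure_setOf_cdf_le (hcont : Continuous (cdf μ)) (a : ℝ) :
    μ {t | cdf μ t ≤ a} = ENNReal.ofReal (min a 1) := by
  rcases le_or_gt 1 a with ha | ha
  · have huniv : {t | cdf μ t ≤ a} = univ :=
      eq_univ_of_forall fun t => (cdf_le_one μ t).trans ha
    simp [huniv, min_eq_right ha]
  rw [min_eq_left ha.le]
  by_cases hle : ∃ t, cdf μ t ≤ a
  · obtain ⟨T, hT⟩ := ((tendsto_cdf_atTop μ).eventually (eventually_gt_nhds ha)).exists
    obtain ⟨c, hca, hS⟩ := (cdf μ).mono.exists_setOf_le_eq_Iic hcont hle ⟨T, hT⟩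
    rw [hS, ← ofReal_cdf, hca]
  · push Not at hle
    have ha0 : a ≤ 0 := ge_of_tendsto' (tendsto_cdf_atBot μ) fun t => (hle t).le
    have hempty : {t | cdf μ t ≤ a} = ∅ :=
      eq_empty_of_forall_notMem fun t ht => (hle t).not_ge ht
    simp [hempty, ENNReal.ofReal_eq_zero.2 ha0]

theorem map_cdf_eq_restrict_Ioc (hcont : Continuous (cdf μ)) :
    μ.map (cdf μ) = volume.restrict (Ioc 0 1) := by
  refine Measure.ext_of_Iic _ _ fun a => ?_
  rw [Measure.map_apply hcont.measurable measurableSet_Iic,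
    Measure.restrict_apply measurableSet_Iic, inter_comm, Ioc_inter_Iic, Real.volume_Ioc,
    sub_zero, inf_comm]
  exact measure_setOf_cdf_le μ hcont a

theorem integral_exp_cdf_eq_zero (hcont : Continuous (cdf μ)) {m : ℤ} (hm : m ≠ 0) :
    ∫ t, Complex.exp (2 * π * Complex.I * m * cdf μ t) ∂μ = 0 := by
  have hc : 2 * π * Complex.I * m ≠ 0 := by simp [hm, Real.pi_ne_zero, Complex.I_ne_zero]
  have hexp : Complex.exp (2 * π * Complex.I * m) = 1 := by
    rw [show 2 * π * Complex.I * m = m * (2 * π * Complex.I) by ring]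
    exact Complex.exp_int_mul_two_pi_mul_I m
  rw [← integral_map (f := fun u : ℝ => Complex.exp (2 * π * Complex.I * m * u))
      hcont.measurable.aemeasurable (by fun_prop : Continuous _).aestronglyMeasurable,
    map_cdf_eq_restrict_Ioc μ hcont, ← intervalIntegral.integral_of_le zero_le_one,
    integral_exp_mul_complex hc]
  simp [hexp]

end IntegralTransform

section Density

variable {g : ℝ → ℝ}

theorem continuous_integral_Iio (hg : Integrable g) : Continuous fun t => ∫ s in Iio t, g s := by
  have h : (fun t => ∫ s in Iio t, g s) =
      fun t => (∫ s in (0 : ℝ)..t, g s) + ∫ s in Iic 0, g s := by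
    funext t
    rw [setIntegral_congr_set Iio_ae_eq_Iic,
      ← intervalIntegral.integral_Iic_sub_Iic hg.integrableOn hg.integrableOn, sub_add_cancel]
  rw [h]
  exact (hg.continuous_primitive 0).add continuous_const

theorem isProbabilityMeasure_withDensity_ofReal (hg : Integrable g) (hg0 : 0 ≤ᵐ[volume] g)
    (hg1 : ∫ t, g t = 1) :
    IsProbabilityMeasure (volume.withDensity fun t => ENNReal.ofReal (g t)) :=
  ⟨by rw [withDensity_apply _ MeasurableSet.univ, Measure.restrict_univ,
    ← ofReal_integral_eq_lintegral_ofReal hg hg0, hg1, ENNReal.ofReal_one]⟩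

theorem cdf_withDensity_ofReal (hg : Integrable g) (hg0 : 0 ≤ᵐ[volume] g)
    (hg1 : ∫ t, g t = 1) :
    cdf (volume.withDensity fun t => ENNReal.ofReal (g t)) = fun t => ∫ s in Iio t, g s := by
  have := isProbabilityMeasure_withDensity_ofReal hg hg0 hg1
  funext t
  rw [cdf_eq_real, measureReal_def, withDensity_apply _ measurableSet_Iic,
    ← ofReal_integral_eq_lintegral_ofReal hg.integrableOn (ae_restrict_of_ae hg0),
    ENNReal.toReal_ofReal (integral_nonneg_of_ae (ae_restrict_of_ae hg0)),
    setIntegral_congr_set Iio_ae_eq_Iic]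

theorem integral_mul_exp_integral_Iio_eq_zero (hg : Integrable g) (hg0 : 0 ≤ᵐ[volume] g)
    (hg1 : ∫ t, g t = 1) {m : ℤ} (hm : m ≠ 0) :
    ∫ t, (g t : ℂ) * Complex.exp (2 * π * Complex.I * m * ∫ s in Iio t, g s) = 0 := by
  set μ := volume.withDensity fun t => ENNReal.ofReal (g t)
  have := isProbabilityMeasure_withDensity_ofReal hg hg0 hg1
  have hcdf := cdf_withDensity_ofReal hg hg0 hg1
  have hcont : Continuous (cdf μ) := hcdf ▸ continuous_integral_Iio hg
  rw [← integral_exp_cdf_eq_zero μ hcont hm, hcdf,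
    integral_withDensity_eq_integral_toReal_smul₀ hg.aemeasurable.ennreal_ofReal
      (ae_of_all _ fun _ => ENNReal.ofReal_lt_top)]
  refine integral_congr_ae (hg0.mono fun t ht => ?_)
  simp [ENNReal.toReal_ofReal ht, Complex.real_smul]

end Density

section FirstCoordinate

variable {n : ℕ} {E : Type*} [NormedAddCommGroup E]

theorem measurePreserving_finCons :
    MeasurePreserving (MeasurableEquiv.piFinSuccAbove (fun _ : Fin (n + 1) => ℝ) 0).symm
      (volume.prod volume) volume := by
  rw [← Measure.volume_eq_prod]
  exact (volume_preserving_piFinSuccAbove (fun _ : Fin (n + 1) => ℝ) 0).symm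

theorem piFinSuccAbove_zero_symm_apply (p : ℝ × (Fin n → ℝ)) :
    (MeasurableEquiv.piFinSuccAbove (fun _ : Fin (n + 1) => ℝ) 0).symm p = Fin.cons p.1 p.2 :=
  Fin.insertNth_zero' p.1 p.2

theorem integrable_comp_finCons {h : (Fin (n + 1) → ℝ) → E} (hh : Integrable h) :
    Integrable (fun p : ℝ × (Fin n → ℝ) => h (Fin.cons p.1 p.2)) (volume.prod volume) := by
  have := (measurePreserving_finCons.integrable_comp_emb
    (MeasurableEquiv.measurableEmbedding _)).2 hh
  simpa only [Function.comp_def, piFinSuccAbove_zero_symm_apply] using this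

theorem integral_eq_integral_integral_finCons [NormedSpace ℝ E] {h : (Fin (n + 1) → ℝ) → E}
    (hh : Integrable h) :
    ∫ x, h x = ∫ t, ∫ y, h (Fin.cons t y) := by
  rw [← integral_prod _ (integrable_comp_finCons hh),
    ← measurePreserving_finCons.integral_comp (MeasurableEquiv.measurableEmbedding _)]
  simp only [piFinSuccAbove_zero_symm_apply]

theorem ae_comp_finCons {P : (Fin (n + 1) → ℝ) → Prop} (hP : ∀ᵐ x, P x) :
    ∀ᵐ t, ∀ᵐ y, P (Fin.cons t y) := by
  refine Measure.ae_ae_of_ae_prod (μ := (volume : Measure ℝ))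
    (ν := (volume : Measure (Fin n → ℝ))) (p := fun p => P (Fin.cons p.1 p.2)) ?_
  have := measurePreserving_finCons.quasiMeasurePreserving.tendsto_ae.eventually hP
  simpa only [piFinSuccAbove_zero_symm_apply] using this

theorem integral_mul_comp_zero {ρ : (Fin (n + 1) → ℝ) → ℝ} (hρ : Integrable ρ) {F : ℝ → ℂ}
    (hF : Continuous F) {C : ℝ} (hFC : ∀ t, ‖F t‖ ≤ C) :
    ∫ x, (ρ x : ℂ) * F (x 0) = ∫ t, ((∫ y, ρ (Fin.cons t y) : ℝ) : ℂ) * F t := by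
  have hint : Integrable fun x : Fin (n + 1) → ℝ => (ρ x : ℂ) * F (x 0) :=
    hρ.ofReal.mul_bdd (hF.comp (continuous_apply 0)).aestronglyMeasurable
      (ae_of_all _ fun _ => hFC _)
  rw [integral_eq_integral_integral_finCons hint]
  simp only [Fin.cons_zero, integral_mul_const, integral_complex_ofReal]

end FirstCoordinate

section Marginal

variable {N : ℕ} {ρ : (Fin 3 → ℝ) → ℝ}

theorem marginalJ_eq_integral_div :
    marginalJ N ρ = fun t => ∫ y, ρ (Fin.cons t y) / N := by
  funext t
  rw [marginalJ, integral_div, one_div_mul_eq_div]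

theorem integrable_marginalJ (hint : Integrable ρ) : Integrable (marginalJ N ρ) :=
  (integrable_comp_finCons hint).integral_prod_left.const_mul _

theorem marginalJ_nonneg_ae (hpos : ∀ᵐ x, 0 ≤ ρ x) : 0 ≤ᵐ[volume] marginalJ N ρ :=
  (ae_comp_finCons hpos).mono fun _ ht => mul_nonneg (by positivity) (integral_nonneg_of_ae ht)

theorem integral_marginalJ (hN : 1 ≤ N) (hint : Integrable ρ) (hmass : ∫ x, ρ x = N) :
    ∫ t, marginalJ N ρ t = 1 := by
  have hN0 : (N : ℝ) ≠ 0 := by positivity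
  simp only [marginalJ]
  rw [integral_const_mul, ← integral_eq_integral_integral_finCons hint, hmass,
    one_div_mul_cancel hN0]

theorem orbital_mul_conj_orbital {x : Fin 3 → ℝ} (hx : 0 ≤ ρ x) (j k : ℤ) :
    orbital N ρ j x * starRingEnd ℂ (orbital N ρ k x) =
      ((ρ x / N : ℝ) : ℂ) *
        Complex.exp (2 * π * Complex.I * (j - k : ℤ) * cumulY N ρ (x 0)) := by
  have hsq : (Real.sqrt (ρ x / N) : ℂ) * Real.sqrt (ρ x / N) = ((ρ x / N : ℝ) : ℂ) := by
    rw [← Complex.ofReal_mul, Real.mul_self_sqrt (by positivity)]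
  rw [orbital, orbital, map_mul, ← Complex.exp_conj, Complex.conj_ofReal, ← hsq,
    mul_mul_mul_comm, ← Complex.exp_add]
  congr 2
  simp only [map_mul, Complex.conj_I, Complex.conj_ofReal, map_ofNat, map_intCast]
  push_cast
  ring

end Marginal

/-- **Orthonormality of the transported orbitals.** If `ρ ≥ 0` is integrable on `ℝ³`
with `∫ ρ = N ≥ 1`, then the family `{φ_k}_{k ∈ ℤ}` is orthonormal in `L²(ℝ³; ℂ)`. -/
theorem orbitals_orthonormal (N : ℕ) (hN : 1 ≤ N) (ρ : (Fin 3 → ℝ) → ℝ)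
    (hint : Integrable ρ) (hpos : ∀ᵐ x : Fin 3 → ℝ, 0 ≤ ρ x)
    (hmass : ∫ x : Fin 3 → ℝ, ρ x = N) :
    ∀ j k : ℤ,
      ∫ x : Fin 3 → ℝ, orbital N ρ j x * starRingEnd ℂ (orbital N ρ k x) =
        if j = k then 1 else 0 := by
  intro j k
  set F : ℝ → ℂ := fun t => Complex.exp (2 * π * Complex.I * (j - k : ℤ) * cumulY N ρ t)
  have hY : Continuous (cumulY N ρ) := continuous_integral_Iio (integrable_marginalJ hint)
  have hF : Continuous F := by fun_prop
  have hF_norm (t : ℝ) : ‖F t‖ ≤ 1 := by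
    rw [Complex.norm_exp]
    simp
  calc ∫ x, orbital N ρ j x * starRingEnd ℂ (orbital N ρ k x)
      = ∫ x, ((ρ x / N : ℝ) : ℂ) * F (x 0) :=
        integral_congr_ae (hpos.mono fun x hx => orbital_mul_conj_orbital hx j k)
    _ = ∫ t, (marginalJ N ρ t : ℂ) * F t := by
        rw [integral_mul_comp_zero (hint.div_const _) hF hF_norm, marginalJ_eq_integral_div]
    _ = if j = k then 1 else 0 := by
        split_ifs with hjk
        · simp [F, hjk, integral_complex_ofReal, integral_marginalJ hN hint hmass]
        · exact integral_mul_exp_integral_Iio_eq_zero (integrable_marginalJ hint)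
            (marginalJ_nonneg_ae hpos) (integral_marginalJ hN hint hmass) (sub_ne_zero.2 hjk)
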